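/- arXiv:1202.2981 — 4 statements merged into one kernel-verified Lean document; each statement's English description precedes it below -/
import Mathlib

section
/- For fixed $\varepsilon_0 \in (0, 1/3)$ and $P_0 \in (0,1)$, the function $n_2(p) = \frac{-\ln(1 - P_0)}{D[(p - \varepsilon_0)/(1 + \varepsilon_0), p]}$ is bounded on the interval $(1 - 2\varepsilon_0, 1)$. -/
/-!
For `0 < x ≤ y < 1` the divergence satisfies the Pinsker-type bound `(y - x)² / 2 ≤ KL x y`:
the first summand is at least `x - y` by `log u ≥ 1 - 1/u`, and the second at least
`(y - x) + (y - x)² / 2` by the first two terms of `-log (1 - s) = ∑ sⁿ / n`.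
For `p ∈ (1 - 2ε₀, 1)` the point `(p - ε₀) / (1 + ε₀)` is positive
and lies at distance at least `ε₀ / 2` below `p`, so the divergence in the denominator
stays above `ε₀² / 8`.
-/

/-- Bernoulli Kullback-Leibler divergence. -/
noncomputable def KL (x y : ℝ) : ℝ :=
  x * Real.log (x / y) + (1 - x) * Real.log ((1 - x) / (1 - y))

open Real

lemma add_sq_div_two_le_neg_log_one_sub {s : ℝ} (hs₀ : 0 ≤ s) (hs₁ : s < 1) :
    s + s ^ 2 / 2 ≤ -log (1 - s) := by
  have hsum := hasSum_pow_div_log_of_abs_lt_one (abs_lt.2 ⟨by linarith, hs₁⟩)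
  simpa [Finset.sum_range_succ, one_add_one_eq_two] using
    sum_le_hasSum (Finset.range 2) (fun i _ => by positivity) hsum

lemma sub_sq_div_two_le_KL {x y : ℝ} (hx : 0 < x) (hxy : x ≤ y) (hy : y < 1) :
    (y - x) ^ 2 / 2 ≤ KL x y := by
  have hx₁ : 0 < 1 - x := by linarith
  have hfirst : x - y ≤ x * log (x / y) := by
    have h := one_sub_inv_le_log_of_pos (div_pos hx (hx.trans_le hxy))
    rw [inv_div] at h
    calc x - y = x * (1 - y / x) := by field_simp
      _ ≤ x * log (x / y) := mul_le_mul_of_nonneg_left h hx.le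
  have hsecond : (y - x) + (y - x) ^ 2 / 2 ≤ (1 - x) * log ((1 - x) / (1 - y)) := by
    set s := (y - x) / (1 - x) with hs
    have hs₀ : 0 ≤ s := div_nonneg (by linarith) hx₁.le
    have hs₁ : s < 1 := (div_lt_one hx₁).2 (by linarith)
    have hlog : log ((1 - x) / (1 - y)) = -log (1 - s) := by
      rw [← log_inv, hs]
      congr 1
      field_simp
      ring
    calc (y - x) + (y - x) ^ 2 / 2 ≤ (1 - x) * (s + s ^ 2 / 2) := by
          rw [hs]
          field_simp
          nlinarith [sq_nonneg (y - x)]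
      _ ≤ (1 - x) * log ((1 - x) / (1 - y)) := by
          rw [hlog]
          exact mul_le_mul_of_nonneg_left (add_sq_div_two_le_neg_log_one_sub hs₀ hs₁) hx₁.le
  unfold KL
  linarith

lemma sq_div_eight_le_KL_shift {ε p : ℝ} (hε : ε ∈ Set.Ioo (0 : ℝ) (1 / 3))
    (hp : p ∈ Set.Ioo (1 - 2 * ε) 1) :
    ε ^ 2 / 8 ≤ KL ((p - ε) / (1 + ε)) p := by
  obtain ⟨hε₀, hε₁⟩ := hε
  obtain ⟨hp₀, hp₁⟩ := hp
  have hpos : 0 < (p - ε) / (1 + ε) := div_pos (by linarith) (by linarith)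
  have hgap : ε / 2 ≤ p - (p - ε) / (1 + ε) := by
    rw [le_sub_iff_add_le, ← le_sub_iff_add_le', div_le_iff₀ (by linarith)]
    nlinarith
  calc ε ^ 2 / 8 = (ε / 2) ^ 2 / 2 := by ring
    _ ≤ (p - (p - ε) / (1 + ε)) ^ 2 / 2 := by gcongr
    _ ≤ KL ((p - ε) / (1 + ε)) p := sub_sq_div_two_le_KL hpos (by linarith) hp₁

theorem stmt_12_general (ε₀ P₀ : ℝ) (hε₀ : ε₀ ∈ Set.Ioo (0 : ℝ) (1/3)) :
    ∃ C : ℝ, ∀ p ∈ Set.Ioo (1 - 2 * ε₀) 1,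
      |(-Real.log (1 - P₀)) / KL ((p - ε₀) / (1 + ε₀)) p| ≤ C := by
  refine ⟨|Real.log (1 - P₀)| / (ε₀ ^ 2 / 8), fun p hp => ?_⟩
  have hKL := sq_div_eight_le_KL_shift hε₀ hp
  have hpos : 0 < ε₀ ^ 2 / 8 := by have := hε₀.1; positivity
  rw [abs_div, abs_neg, abs_of_pos (hpos.trans_le hKL)]
  exact div_le_div_of_nonneg_left (abs_nonneg _) hpos hKL

/-- For fixed `ε₀ ∈ (0, 1/3)` and `P₀ ∈ (0,1)`, the function
`n₂(p) = -log(1 - P₀) / D[(p - ε₀)/(1 + ε₀), p]` is bounded on `(1 - 2ε₀, 1)`. -/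
theorem stmt_12 (ε₀ P₀ : ℝ) (hε₀ : ε₀ ∈ Set.Ioo (0 : ℝ) (1/3))
    (hP₀ : P₀ ∈ Set.Ioo (0 : ℝ) 1) :
    ∃ C : ℝ, ∀ p ∈ Set.Ioo (1 - 2 * ε₀) 1,
      |(-Real.log (1 - P₀)) / KL ((p - ε₀) / (1 + ε₀)) p| ≤ C :=
  stmt_12_general ε₀ P₀ hε₀
end

section
/- Fix $n_0 \in \mathbb{Z}_+$. The function $h_1(p) = 1 - (1-p)^{n_0} - e^{-n_0 D[2p/(1-p), p]}$ is strictly increasing on $(0, 1/3)$, satisfies $\lim_{p \to 0^+} h_1(p) = -1$, and $\lim_{p \to 1/3^-} h_1(p) = 1 - (1/3)^{n_0} - (2/3)^{n_0}$. -/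
/-!
Since `(1 - p)^n₀` is strictly decreasing, it suffices that `p ↦ D[2p/(1-p), p]` is
nondecreasing on `(0, 1/3)`. In closed form this divergence is `N(p) / (1 - p)` with
`N(p) = 2p log 2 + (1-3p) log(1-3p) - (2-4p) log(1-p)`, and its derivative
`(2 log 2 - 2 log(1-3p) + 2 log(1-p) - (1+p)) / (1-p)^2` is positive because
`1 - 3p < 1 - p` and `2 log 2 > 4/3 > 1 + p`.
The closed form is continuous on `[0, 1/3]`, with value `0` at `0` and `log 3` at `1/3`,
which gives both one-sided limits.
-/

open Real Filter Set Topology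

noncomputable def klNum (p : ℝ) : ℝ :=
  2 * p * log 2 + (1 - 3 * p) * log (1 - 3 * p) - (2 - 4 * p) * log (1 - p)

lemma KL_two_mul_div_one_sub {p : ℝ} (h0 : p ≠ 0) (h1 : 1 - p ≠ 0) (h3 : 1 - 3 * p ≠ 0) :
    KL (2 * p / (1 - p)) p = klNum p / (1 - p) := by
  have hx : 2 * p / (1 - p) / p = 2 / (1 - p) := by field_simp
  have hx' : (1 - 2 * p / (1 - p)) / (1 - p) = (1 - 3 * p) / ((1 - p) * (1 - p)) := by
    field_simp; ring
  rw [KL, hx, hx', log_div two_ne_zero h1, log_div h3 (mul_ne_zero h1 h1), log_mul h1 h1, klNum]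
  field_simp
  ring

lemma hasDerivAt_klNum {p : ℝ} (h1 : 1 - p ≠ 0) (h3 : 1 - 3 * p ≠ 0) :
    HasDerivAt klNum
      (2 * log 2 - 3 * log (1 - 3 * p) - 3 + 4 * log (1 - p) + (2 - 4 * p) / (1 - p)) p := by
  have d1 : HasDerivAt (fun q : ℝ => 1 - q) (-1) p := by
    simpa using (hasDerivAt_id p).const_sub 1
  have d3 : HasDerivAt (fun q : ℝ => 1 - 3 * q) (-3) p := by
    simpa using ((hasDerivAt_id p).const_mul 3).const_sub 1
  have d4 : HasDerivAt (fun q : ℝ => 2 - 4 * q) (-4) p := by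
    simpa using ((hasDerivAt_id p).const_mul 4).const_sub 2
  have dlin : HasDerivAt (fun q : ℝ => 2 * q * log 2) (2 * log 2) p := by
    simpa using ((hasDerivAt_id p).const_mul 2).mul_const (log 2)
  refine ((dlin.add (d3.mul (d3.log h3))).sub (d4.mul (d1.log h1))).congr_deriv ?_
  field_simp
  ring

lemma hasDerivAt_klNum_div_one_sub {p : ℝ} (h1 : 1 - p ≠ 0) (h3 : 1 - 3 * p ≠ 0) :
    HasDerivAt (fun q => klNum q / (1 - q))
      ((2 * log 2 - 2 * log (1 - 3 * p) + 2 * log (1 - p) - (1 + p)) / (1 - p) ^ 2) p := by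
  have d1 : HasDerivAt (fun q : ℝ => 1 - q) (-1) p := by
    simpa using (hasDerivAt_id p).const_sub 1
  refine ((hasDerivAt_klNum h1 h3).div d1 h1).congr_deriv ?_
  rw [klNum]
  field_simp
  ring

lemma monotoneOn_klNum_div_one_sub : MonotoneOn (fun q => klNum q / (1 - q)) (Ioo 0 (1 / 3)) := by
  have hderiv : ∀ p ∈ Ioo (0 : ℝ) (1 / 3), HasDerivAt (fun q => klNum q / (1 - q))
      ((2 * log 2 - 2 * log (1 - 3 * p) + 2 * log (1 - p) - (1 + p)) / (1 - p) ^ 2) p :=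
    fun p hp => hasDerivAt_klNum_div_one_sub (by linarith [hp.2]) (by linarith [hp.2])
  refine monotoneOn_of_hasDerivWithinAt_nonneg (convex_Ioo 0 (1 / 3))
    (fun p hp => (hderiv p hp).continuousAt.continuousWithinAt)
    (fun p hp => (hderiv p (by rwa [interior_Ioo] at hp)).hasDerivWithinAt) (fun p hp => ?_)
  rw [interior_Ioo] at hp
  have hlog : log (1 - 3 * p) < log (1 - p) :=
    log_lt_log (by linarith [hp.2]) (by linarith [hp.1])
  have := log_two_gt_d9
  have : 0 < 2 * log 2 - 2 * log (1 - 3 * p) + 2 * log (1 - p) - (1 + p) := by linarith [hp.2]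
  positivity

lemma continuousAt_klNum_div_one_sub {a : ℝ} (ha : a ≠ 1) :
    ContinuousAt (fun q => klNum q / (1 - q)) a := by
  have ha' : 1 - a ≠ 0 := sub_ne_zero.2 ha.symm
  have hmulLog : Continuous fun q : ℝ => (1 - 3 * q) * log (1 - 3 * q) :=
    continuous_mul_log.comp (by fun_prop)
  have hlog : ContinuousAt (fun q : ℝ => log (1 - q)) a :=
    (continuousAt_log ha').comp (by fun_prop)
  refine ContinuousAt.div ?_ (by fun_prop) ha'
  exact ((by fun_prop : Continuous fun q : ℝ => 2 * q * log 2).continuousAt.add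
    hmulLog.continuousAt).sub ((by fun_prop : ContinuousAt (fun q : ℝ => 2 - 4 * q) a).mul hlog)

lemma klNum_one_third_div : klNum (1 / 3) / (1 - 1 / 3) = log 3 := by
  rw [klNum, show (1 : ℝ) - 3 * (1 / 3) = 0 by norm_num,
    show (1 : ℝ) - 1 / 3 = 2 / 3 by norm_num, log_div (by norm_num) (by norm_num)]
  ring

section OneSubPowSubExp

variable {n : ℕ} {D : ℝ → ℝ}

lemma strictMonoOn_one_sub_pow_sub_exp (hn : n ≠ 0) {s : Set ℝ} (hs : s ⊆ Iic 1)
    (hD : MonotoneOn D s) :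
    StrictMonoOn (fun p => 1 - (1 - p) ^ n - exp (-(n : ℝ) * D p)) s := by
  intro x hx y hy hxy
  have hpow : (1 - y) ^ n < (1 - x) ^ n :=
    pow_lt_pow_left₀ (by linarith) (sub_nonneg.2 (hs hy)) hn
  have hexp : exp (-(n : ℝ) * D y) ≤ exp (-(n : ℝ) * D x) :=
    exp_le_exp.2 (mul_le_mul_of_nonpos_left (hD hx hy hxy.le) (by simp))
  linarith

lemma tendsto_one_sub_pow_sub_exp {g : ℝ → ℝ} {l : Filter ℝ} {a : ℝ} (hl : l ≤ 𝓝 a)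
    (hDg : D =ᶠ[l] g) (hg : ContinuousAt g a) :
    Tendsto (fun p => 1 - (1 - p) ^ n - exp (-(n : ℝ) * D p)) l
      (𝓝 (1 - (1 - a) ^ n - exp (-(n : ℝ) * g a))) := by
  have hD : Tendsto D l (𝓝 (g a)) := (hg.tendsto.mono_left hl).congr' hDg.symm
  have hid : Tendsto (fun p : ℝ => p) l (𝓝 a) := tendsto_id.mono_right hl
  exact (tendsto_const_nhds.sub ((tendsto_const_nhds.sub hid).pow n)).sub
    ((tendsto_const_nhds.mul hD).rexp)

end OneSubPowSubExp

/-- `h₁(p) = 1 - (1-p)^{n₀} - e^{-n₀ D[2p/(1-p), p]}` is strictly increasing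
on `(0, 1/3)`, tends to `-1` as `p → 0⁺` and to `1 - (1/3)^{n₀} - (2/3)^{n₀}` as `p → 1/3⁻`. -/
theorem stmt_13 (n₀ : ℕ) (hn₀ : 1 ≤ n₀) :
    StrictMonoOn (fun p : ℝ => 1 - (1 - p) ^ n₀ - Real.exp (-(n₀ : ℝ) * KL (2 * p / (1 - p)) p))
      (Set.Ioo (0 : ℝ) (1/3)) ∧
    Filter.Tendsto (fun p : ℝ => 1 - (1 - p) ^ n₀ - Real.exp (-(n₀ : ℝ) * KL (2 * p / (1 - p)) p))
      (nhdsWithin 0 (Set.Ioi 0)) (nhds (-1)) ∧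
    Filter.Tendsto (fun p : ℝ => 1 - (1 - p) ^ n₀ - Real.exp (-(n₀ : ℝ) * KL (2 * p / (1 - p)) p))
      (nhdsWithin (1/3) (Set.Iio (1/3))) (nhds (1 - (1/3 : ℝ) ^ n₀ - (2/3 : ℝ) ^ n₀)) := by
  have hKL : EqOn (fun p => KL (2 * p / (1 - p)) p) (fun q => klNum q / (1 - q)) (Ioo 0 (1 / 3)) :=
    fun p hp => KL_two_mul_div_one_sub hp.1.ne' (by linarith [hp.2]) (by linarith [hp.2])
  refine ⟨?_, ?_, ?_⟩
  · exact strictMonoOn_one_sub_pow_sub_exp (by omega)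
      (fun p hp => mem_Iic.2 (by linarith [hp.2])) (monotoneOn_klNum_div_one_sub.congr hKL.symm)
  · convert tendsto_one_sub_pow_sub_exp nhdsWithin_le_nhds
      (hKL.eventuallyEq_of_mem (Ioo_mem_nhdsGT (by norm_num)))
      (continuousAt_klNum_div_one_sub (a := 0) (by norm_num)) using 2
    simp [klNum]
  · convert tendsto_one_sub_pow_sub_exp nhdsWithin_le_nhds
      (hKL.eventuallyEq_of_mem (Ioo_mem_nhdsLT (by norm_num)))
      (continuousAt_klNum_div_one_sub (a := 1 / 3) (by norm_num)) using 2
    rw [klNum_one_third_div, neg_mul, exp_neg, exp_nat_mul, exp_log (by norm_num), one_div,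
      inv_pow]
    norm_num
    ring
end

section
/- Fix $n_0 \in \mathbb{Z}_+$. The function $h_3(p) = 1 - e^{-n_0 D[(3p-1)/(3-p), p]}$ is continuous and strictly decreasing on $(1/3, 1)$, with $\lim_{p \to 1/3^+} h_3(p) = 1 - (2/3)^{n_0}$ and $\lim_{p \to 1^-} h_3(p) = 0$. -/
/-!
Write `q = (3p - 1)/(3 - p)`. The derivative of `p ↦ D[q, p]` on `(1/3, 1)` is
`8/(3 - p)² · log((3p - 1)/(4p)) + (p + 1)/(p(3 - p))`, and the Padé bound
`log t ≤ 2(t - 1)/(t + 1)` turns it into at most `(p + 1)(-7p² + 6p - 3)/(p(3 - p)²(7p - 1)) < 0`.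
As `y ↦ 1 - e^{-n₀ y}` is strictly increasing, `h₃` is strictly decreasing. For the limits,
`D[q, p] = q log q - q log p + (1 - q) log(4/(3 - p))` on `(1/3, 1)`, and the right-hand side is
continuous on `[1/3, 1]` with value `log(3/2)` at `1/3` and `0` at `1`.
-/

open Real Filter Set Topology

theorem HasDerivAt.KL {f g : ℝ → ℝ} {f' g' t : ℝ} (hf : HasDerivAt f f' t)
    (hg : HasDerivAt g g' t) (hf₀ : 0 < f t) (hf₁ : f t < 1) (hg₀ : 0 < g t) (hg₁ : g t < 1) :
    HasDerivAt (fun s => KL (f s) (g s)) (f' * Real.log (f t * (1 - g t) / (g t * (1 - f t)))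
      + g' * (g t - f t) / (g t * (1 - g t))) t := by
  have hf₁' : 1 - f t ≠ 0 := by linarith
  have hg₁' : 1 - g t ≠ 0 := by linarith
  have h₁ := hf.fun_mul ((hf.fun_div hg hg₀.ne').log (div_pos hf₀ hg₀).ne')
  have h₂ := (hf.const_sub 1).fun_mul (((hf.const_sub 1).fun_div
    (hg.const_sub 1) hg₁').log (div_ne_zero hf₁' hg₁'))
  refine (h₁.fun_add h₂).congr_deriv ?_
  have hlog : Real.log (f t * (1 - g t) / (g t * (1 - f t)))
      = Real.log (f t / g t) - Real.log ((1 - f t) / (1 - g t)) := by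
    rw [← Real.log_div (by positivity) (div_ne_zero hf₁' hg₁')]
    field_simp
  rw [hlog]
  field_simp
  ring

theorem Real.log_le_two_mul_sub_one_div_add_one {t : ℝ} (ht₀ : 0 < t) (ht₁ : t ≤ 1) :
    log t ≤ 2 * (t - 1) / (t + 1) := by
  -- the first term of the series of `artanh x = ½ log((1 + x)/(1 - x))`, at `x = (1 - t)/(1 + t)`
  have h := sum_range_le_log_div (x := (1 - t) / (1 + t)) (by bound) (by
    rw [div_lt_one (by linarith)]; linarith) 1
  have : (1 + (1 - t) / (1 + t)) / (1 - (1 - t) / (1 + t)) = t⁻¹ := by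
    field_simp; ring_nf; field_simp
  rw [this, log_inv] at h
  norm_num at h
  rw [div_le_iff₀ (by linarith)] at h
  rw [le_div_iff₀ (by linarith)]
  nlinarith

noncomputable def kl₃ (p : ℝ) : ℝ := KL ((3 * p - 1) / (3 - p)) p

/-- A form of `kl₃` that stays continuous at `1/3` and `1`: `x log x` is continuous at `0`, and
`(1 - q)/(1 - p) = 4/(3 - p)` removes the `0/0` at `1`. -/
noncomputable def kl₃Ext (p : ℝ) : ℝ :=
  (3 * p - 1) / (3 - p) * log ((3 * p - 1) / (3 - p)) - (3 * p - 1) / (3 - p) * log p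
    + (1 - (3 * p - 1) / (3 - p)) * log (4 / (3 - p))

theorem eqOn_kl₃_kl₃Ext : EqOn kl₃ kl₃Ext (Ioo (1 / 3) 1) := by
  rintro p ⟨hp₀, hp₁⟩
  have hq : (3 * p - 1) / (3 - p) ≠ 0 := div_ne_zero (by linarith) (by linarith)
  have h₁ : (1 - (3 * p - 1) / (3 - p)) / (1 - p) = 4 / (3 - p) := by
    field_simp [show 3 - p ≠ 0 by linarith, show 1 - p ≠ 0 by linarith]
    ring
  rw [kl₃, KL, kl₃Ext, log_div hq (by linarith), h₁]
  ring

theorem continuousAt_kl₃Ext {p : ℝ} (hp₀ : p ≠ 0) (hp₃ : p ≠ 3) : ContinuousAt kl₃Ext p := by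
  have h₃ : 3 - p ≠ 0 := sub_ne_zero.2 hp₃.symm
  have hq : ContinuousAt (fun p : ℝ => (3 * p - 1) / (3 - p)) p :=
    (by fun_prop : ContinuousAt (fun p : ℝ => 3 * p - 1) p).div (by fun_prop) h₃
  have h₄ : ContinuousAt (fun p : ℝ => log (4 / (3 - p))) p :=
    (continuousAt_const.div (by fun_prop) h₃).log (div_ne_zero four_ne_zero h₃)
  exact ((continuous_mul_log.continuousAt.comp hq).sub (hq.mul (continuousAt_log hp₀))).add
    ((continuousAt_const.sub hq).mul h₄)

theorem kl₃Ext_one_third : kl₃Ext (1 / 3) = log (3 / 2) := by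
  norm_num [kl₃Ext]

theorem kl₃Ext_one : kl₃Ext 1 = 0 := by
  norm_num [kl₃Ext]

theorem continuousOn_kl₃ : ContinuousOn kl₃ (Ioo (1 / 3) 1) := fun p hp =>
  (continuousAt_kl₃Ext (by linarith [hp.1]) (by linarith [hp.2])).continuousWithinAt.congr
    eqOn_kl₃_kl₃Ext (eqOn_kl₃_kl₃Ext hp)

theorem tendsto_kl₃_nhdsGT_one_third : Tendsto kl₃ (𝓝[>] (1 / 3)) (𝓝 (log (3 / 2))) := by
  rw [← kl₃Ext_one_third]
  refine ((continuousAt_kl₃Ext (by norm_num) (by norm_num)).tendsto.mono_left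
    nhdsWithin_le_nhds).congr' ?_
  filter_upwards [Ioo_mem_nhdsGT (by norm_num : (1 / 3 : ℝ) < 1)] with p hp
  exact (eqOn_kl₃_kl₃Ext hp).symm

theorem tendsto_kl₃_nhdsLT_one : Tendsto kl₃ (𝓝[<] 1) (𝓝 0) := by
  rw [← kl₃Ext_one]
  refine ((continuousAt_kl₃Ext (by norm_num) (by norm_num)).tendsto.mono_left
    nhdsWithin_le_nhds).congr' ?_
  filter_upwards [Ioo_mem_nhdsLT (by norm_num : (1 / 3 : ℝ) < 1)] with p hp
  exact (eqOn_kl₃_kl₃Ext hp).symm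

theorem hasDerivAt_kl₃ {p : ℝ} (hp : p ∈ Ioo (1 / 3) 1) :
    HasDerivAt kl₃ (8 / (3 - p) ^ 2 * log ((3 * p - 1) / (4 * p)) + (p + 1) / (p * (3 - p))) p := by
  obtain ⟨hp₀, hp₁⟩ := hp
  have h₃ : 3 - p ≠ 0 := by linarith
  have h₁ : 1 - p ≠ 0 := by linarith
  have hq : HasDerivAt (fun p : ℝ => (3 * p - 1) / (3 - p)) (8 / (3 - p) ^ 2) p := by
    refine (((hasDerivAt_id' p).const_mul 3 |>.sub_const 1).fun_div
      ((hasDerivAt_id' p).const_sub 3) h₃).congr_deriv ?_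
    ring
  have h₄ : 1 - (3 * p - 1) / (3 - p) = 4 * (1 - p) / (3 - p) := by
    field_simp
    ring
  have hlog : (3 * p - 1) / (3 - p) * (1 - p) / (p * (1 - (3 * p - 1) / (3 - p)))
      = (3 * p - 1) / (4 * p) := by
    rw [h₄]
    field_simp
  have hrat : 1 * (p - (3 * p - 1) / (3 - p)) / (p * (1 - p)) = (p + 1) / (p * (3 - p)) := by
    field_simp
    ring
  have h := hq.KL (hasDerivAt_id' p) (div_pos (by linarith) (by linarith))
    ((div_lt_one (by linarith)).2 (by linarith)) (by linarith) hp₁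
  rwa [hlog, hrat] at h

theorem deriv_kl₃_neg {p : ℝ} (hp : p ∈ Ioo (1 / 3) 1) : deriv kl₃ p < 0 := by
  rw [(hasDerivAt_kl₃ hp).deriv]
  obtain ⟨hp₀, hp₁⟩ := hp
  have h₃ : 0 < 3 - p := by linarith
  have h₇ : 0 < 7 * p - 1 := by linarith
  -- `log t ≤ t - 1` is too weak here
  have hlog := log_le_two_mul_sub_one_div_add_one (t := (3 * p - 1) / (4 * p))
    (div_pos (by linarith) (by linarith)) ((div_le_one (by linarith)).2 (by linarith))
  have hpade : 2 * ((3 * p - 1) / (4 * p) - 1) / ((3 * p - 1) / (4 * p) + 1)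
      = -2 * (p + 1) / (7 * p - 1) := by
    field_simp
    ring
  calc 8 / (3 - p) ^ 2 * log ((3 * p - 1) / (4 * p)) + (p + 1) / (p * (3 - p))
      ≤ 8 / (3 - p) ^ 2 * (-2 * (p + 1) / (7 * p - 1)) + (p + 1) / (p * (3 - p)) := by
        rw [← hpade]; gcongr
    _ = (p + 1) * (-7 * p ^ 2 + 6 * p - 3) / (p * (3 - p) ^ 2 * (7 * p - 1)) := by
        rw [div_mul_div_comm, div_add_div _ _ (by positivity) (by positivity),
          div_eq_div_iff (by positivity) (by positivity)]
        ring
    _ < 0 := div_neg_of_neg_of_pos (mul_neg_of_pos_of_neg (by linarith)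
        (by nlinarith [sq_nonneg (p - 3 / 7)])) (by positivity)

theorem strictAntiOn_kl₃ : StrictAntiOn kl₃ (Ioo (1 / 3) 1) :=
  strictAntiOn_of_deriv_neg (convex_Ioo _ _) continuousOn_kl₃ fun p hp =>
    deriv_kl₃_neg (by rwa [interior_Ioo] at hp)

/-- `h₃(p) = 1 - e^{-n₀ D[(3p-1)/(3-p), p]}` is continuous and strictly
decreasing on `(1/3, 1)`, tends to `1 - (2/3)^{n₀}` as `p → 1/3⁺` and to `0` as `p → 1⁻`. -/
theorem stmt_14 (n₀ : ℕ) (hn₀ : 1 ≤ n₀) :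
    ContinuousOn (fun p : ℝ => 1 - Real.exp (-(n₀ : ℝ) * KL ((3 * p - 1) / (3 - p)) p))
      (Set.Ioo (1/3 : ℝ) 1) ∧
    StrictAntiOn (fun p : ℝ => 1 - Real.exp (-(n₀ : ℝ) * KL ((3 * p - 1) / (3 - p)) p))
      (Set.Ioo (1/3 : ℝ) 1) ∧
    Filter.Tendsto (fun p : ℝ => 1 - Real.exp (-(n₀ : ℝ) * KL ((3 * p - 1) / (3 - p)) p))
      (nhdsWithin (1/3) (Set.Ioi (1/3))) (nhds (1 - (2/3 : ℝ) ^ n₀)) ∧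
    Filter.Tendsto (fun p : ℝ => 1 - Real.exp (-(n₀ : ℝ) * KL ((3 * p - 1) / (3 - p)) p))
      (nhdsWithin 1 (Set.Iio 1)) (nhds 0) := by
  set g : ℝ → ℝ := fun y => 1 - exp (-(n₀ : ℝ) * y)
  have hn : (0 : ℝ) < n₀ := by exact_mod_cast hn₀
  have hg : Continuous g := by fun_prop
  have hg_mono : StrictMono g := fun a b hab =>
    sub_lt_sub_left (exp_lt_exp.2 (by nlinarith)) 1
  have hg_one_third : g (log (3 / 2)) = 1 - (2 / 3) ^ n₀ := by
    show 1 - exp _ = _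
    rw [show -(n₀ : ℝ) * log (3 / 2) = n₀ * log (2 / 3) by
      rw [← inv_div, log_inv]; ring, ← log_pow, exp_log (by positivity)]
  have hg_zero : g 0 = 0 := by simp [g]
  refine ⟨hg.comp_continuousOn continuousOn_kl₃, hg_mono.comp_strictAntiOn strictAntiOn_kl₃,
    ?_, ?_⟩
  · rw [← hg_one_third]
    exact (hg.tendsto _).comp tendsto_kl₃_nhdsGT_one_third
  · rw [← hg_zero]
    exact (hg.tendsto _).comp tendsto_kl₃_nhdsLT_one
end

section
/- (Main theorem, case a.) Let $P_0 \in (0,1)$ and $\varepsilon_0 \in (0,1)$. There exists $n^\star \in \mathbb{Z}_+$ such that for all integers $n \geq n^\star$ and all $p \in [\varepsilon_0, 1)$, if $S_n$ is binomial with parameters $n$ and $p$, then $P\left(\frac{p - \varepsilon_0}{1 + \varepsilon_0} < \frac{S_n}{n} < \frac{p + \varepsilon_0}{1 - \varepsilon_0}\right) \geq P_0$. -/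
open Finset
open scoped Classical

/-- Probability that a binomial random variable with parameters `n`, `p` satisfies `P`. -/
noncomputable def binomProb (n : ℕ) (p : ℝ) (P : ℕ → Prop) : ℝ :=
  ∑ i ∈ (Finset.range (n + 1)).filter (fun i => P i),
    (n.choose i : ℝ) * p ^ i * (1 - p) ^ (n - i)

/-- Binomial pmf term. -/
noncomputable def bterm (n : ℕ) (p : ℝ) (i : ℕ) : ℝ :=
  (n.choose i : ℝ) * p ^ i * (1 - p) ^ (n - i)

lemma bterm_nonneg {n : ℕ} {p : ℝ} (hp : 0 ≤ p) (hp1 : p ≤ 1) (i : ℕ) :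
    0 ≤ bterm n p i := by
  unfold bterm
  have h1 : (0:ℝ) ≤ 1 - p := by linarith
  exact mul_nonneg (mul_nonneg (by positivity) (pow_nonneg hp _)) (pow_nonneg h1 _)

lemma sum_bterm (n : ℕ) (p : ℝ) : ∑ i ∈ Finset.range (n + 1), bterm n p i = 1 := by
  calc ∑ i ∈ Finset.range (n + 1), bterm n p i
      = ∑ i ∈ Finset.range (n + 1), p ^ i * (1 - p) ^ (n - i) * (n.choose i : ℝ) := by
        apply Finset.sum_congr rfl; intro i _; unfold bterm; ring
    _ = (p + (1 - p)) ^ n := (add_pow _ _ _).symm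
    _ = 1 := by rw [show p + (1 - p) = 1 by ring, one_pow]

lemma bterm_key (m k : ℕ) (p : ℝ) :
    ((k + 1 : ℕ) : ℝ) * bterm (m + 1) p (k + 1) = ((m + 1 : ℕ) : ℝ) * p * bterm m p k := by
  have h : (((m + 1).choose (k + 1) : ℕ) : ℝ) * ((k : ℝ) + 1)
      = ((m : ℝ) + 1) * ((m.choose k : ℕ) : ℝ) := by
    exact_mod_cast congrArg (Nat.cast (R := ℝ)) (Nat.add_one_mul_choose_eq m k).symm
  unfold bterm
  have hsub : (m + 1) - (k + 1) = m - k := Nat.succ_sub_succ m k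
  rw [hsub]
  push_cast
  linear_combination (p ^ (k + 1) * (1 - p) ^ (m - k)) * h

lemma sum_i_bterm (n : ℕ) (p : ℝ) :
    ∑ i ∈ Finset.range (n + 1), (i : ℝ) * bterm n p i = (n : ℝ) * p := by
  induction n with
  | zero => simp
  | succ m _ =>
    rw [Finset.sum_range_succ']
    simp only [Nat.cast_zero, zero_mul, add_zero]
    calc ∑ k ∈ Finset.range (m + 1), ((k + 1 : ℕ) : ℝ) * bterm (m + 1) p (k + 1)
        = ∑ k ∈ Finset.range (m + 1), ((m + 1 : ℕ) : ℝ) * p * bterm m p k := by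
          exact Finset.sum_congr rfl (fun k _ => bterm_key m k p)
      _ = ((m + 1 : ℕ) : ℝ) * p * ∑ k ∈ Finset.range (m + 1), bterm m p k := by
          rw [← Finset.mul_sum]
      _ = ((m + 1 : ℕ) : ℝ) * p := by rw [sum_bterm, mul_one]

lemma sum_ii_bterm (n : ℕ) (p : ℝ) :
    ∑ i ∈ Finset.range (n + 1), (i : ℝ) * ((i : ℝ) - 1) * bterm n p i
      = (n : ℝ) * ((n : ℝ) - 1) * p ^ 2 := by
  induction n with
  | zero => simp
  | succ m _ =>
    rw [Finset.sum_range_succ']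
    simp only [Nat.cast_zero, zero_mul, add_zero]
    calc ∑ k ∈ Finset.range (m + 1),
          ((k + 1 : ℕ) : ℝ) * (((k + 1 : ℕ) : ℝ) - 1) * bterm (m + 1) p (k + 1)
        = ∑ k ∈ Finset.range (m + 1), ((m + 1 : ℕ) : ℝ) * p * ((k : ℝ) * bterm m p k) := by
          apply Finset.sum_congr rfl
          intro k _
          have h := bterm_key m k p
          push_cast at h ⊢
          linear_combination (k : ℝ) * h
      _ = ((m + 1 : ℕ) : ℝ) * p * ∑ k ∈ Finset.range (m + 1), (k : ℝ) * bterm m p k := by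
          rw [← Finset.mul_sum]
      _ = ((m + 1 : ℕ) : ℝ) * p * ((m : ℝ) * p) := by rw [sum_i_bterm]
      _ = ((m + 1 : ℕ) : ℝ) * (((m + 1 : ℕ) : ℝ) - 1) * p ^ 2 := by push_cast; ring

lemma sum_sq_bterm (n : ℕ) (p : ℝ) :
    ∑ i ∈ Finset.range (n + 1), ((i : ℝ) - (n : ℝ) * p) ^ 2 * bterm n p i
      = (n : ℝ) * p * (1 - p) := by
  have expand : ∀ i : ℕ, ((i : ℝ) - (n : ℝ) * p) ^ 2 * bterm n p i
      = (i : ℝ) * ((i : ℝ) - 1) * bterm n p i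
        + (1 - 2 * (n : ℝ) * p) * ((i : ℝ) * bterm n p i)
        + ((n : ℝ) * p) ^ 2 * bterm n p i := by intro i; ring
  rw [Finset.sum_congr rfl (fun i _ => expand i), Finset.sum_add_distrib,
    Finset.sum_add_distrib, ← Finset.mul_sum, ← Finset.mul_sum,
    sum_ii_bterm, sum_i_bterm, sum_bterm]
  ring

/-- Main theorem, case a: For any `P₀ ∈ (0,1)` and `ε₀ ∈ (0,1)`, there is
`n⋆ ∈ ℤ₊` such that for all `n ≥ n⋆` and all `p ∈ [ε₀, 1)`,
`P((p-ε₀)/(1+ε₀) < Sₙ/n < (p+ε₀)/(1-ε₀)) ≥ P₀`. -/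
theorem stmt_17 (P₀ ε₀ : ℝ) (hP₀ : P₀ ∈ Set.Ioo (0 : ℝ) 1) (hε₀ : ε₀ ∈ Set.Ioo (0 : ℝ) 1) :
    ∃ nstar : ℕ, 1 ≤ nstar ∧ ∀ n : ℕ, nstar ≤ n → ∀ p ∈ Set.Ico ε₀ (1 : ℝ),
      binomProb n p
        (fun i => (p - ε₀) / (1 + ε₀) < (i : ℝ) / n ∧ (i : ℝ) / n < (p + ε₀) / (1 - ε₀))
        ≥ P₀ := by
  obtain ⟨hP0, hP1⟩ := hP₀
  obtain ⟨he0, he1⟩ := hε₀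
  refine ⟨⌈1 / (4 * (1 - P₀) * ε₀ ^ 2)⌉₊ + 1, Nat.le_add_left 1 _, ?_⟩
  intro n hn p hp
  obtain ⟨hpl, hpu⟩ := hp
  have hp0 : 0 ≤ p := le_trans he0.le hpl
  have hn1 : 1 ≤ n := le_trans (Nat.le_add_left 1 _) hn
  have hnR : (0 : ℝ) < n := by exact_mod_cast hn1
  -- n is at least 1/(4(1-P₀)ε₀²)
  have hcn : 1 / (4 * (1 - P₀) * ε₀ ^ 2) ≤ (n : ℝ) := by
    calc 1 / (4 * (1 - P₀) * ε₀ ^ 2) ≤ (⌈1 / (4 * (1 - P₀) * ε₀ ^ 2)⌉₊ : ℝ) := Nat.le_ceil _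
      _ ≤ (n : ℝ) := by exact_mod_cast le_trans (Nat.le_add_right _ 1) hn
  set Pr : ℕ → Prop := fun i =>
    (p - ε₀) / (1 + ε₀) < (i : ℝ) / n ∧ (i : ℝ) / n < (p + ε₀) / (1 - ε₀) with hPr
  have hPrDef : ∀ i : ℕ, ¬ Pr i → ε₀ ^ 2 ≤ ((i : ℝ) / n - p) ^ 2 := by
    intro i hnot'
    have hnot : ¬ ((p - ε₀) / (1 + ε₀) < (i : ℝ) / n ∧ (i : ℝ) / n < (p + ε₀) / (1 - ε₀)) :=
      hnot'
    push_neg at hnot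
    have hL : (p - ε₀) / (1 + ε₀) ≤ p - ε₀ :=
      div_le_self (by linarith) (by linarith)
    have hU : p + ε₀ ≤ (p + ε₀) / (1 - ε₀) := by
      rw [le_div_iff₀ (by linarith)]
      nlinarith
    by_cases hcase : (p - ε₀) / (1 + ε₀) < (i : ℝ) / n
    · have h2 := hnot hcase
      have : p + ε₀ ≤ (i : ℝ) / n := le_trans hU h2
      nlinarith
    · push_neg at hcase
      have : (i : ℝ) / n ≤ p - ε₀ := le_trans hcase hL
      nlinarith
  clear_value Pr
  have hsplit := Finset.sum_filter_add_sum_filter_not (Finset.range (n + 1)) Pr (bterm n p)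
  have htotal : ∑ i ∈ (Finset.range (n + 1)).filter Pr, bterm n p i
      + ∑ i ∈ (Finset.range (n + 1)).filter (fun i => ¬ Pr i), bterm n p i = 1 := by
    rw [hsplit, sum_bterm]
  -- bound the bad part via Chebyshev
  have hbad : ∑ i ∈ (Finset.range (n + 1)).filter (fun i => ¬ Pr i), bterm n p i
      ≤ 1 / (4 * (n : ℝ) * ε₀ ^ 2) := by
    have hdenpos : (0 : ℝ) < (n : ℝ) ^ 2 * ε₀ ^ 2 := by positivity
    have step1 : ∀ i ∈ (Finset.range (n + 1)).filter (fun i => ¬ Pr i),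
        bterm n p i ≤ ((i : ℝ) - (n : ℝ) * p) ^ 2 / ((n : ℝ) ^ 2 * ε₀ ^ 2) * bterm n p i := by
      intro i hi
      simp only [Finset.mem_filter] at hi
      have hsq : ε₀ ^ 2 ≤ ((i : ℝ) / n - p) ^ 2 := hPrDef i hi.2
      have hrw : ((i : ℝ) - (n : ℝ) * p) ^ 2 = (n : ℝ) ^ 2 * ((i : ℝ) / n - p) ^ 2 := by
        field_simp
      have h1 : 1 ≤ ((i : ℝ) - (n : ℝ) * p) ^ 2 / ((n : ℝ) ^ 2 * ε₀ ^ 2) := by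
        rw [le_div_iff₀ hdenpos, hrw, one_mul]
        have := mul_le_mul_of_nonneg_left hsq (le_of_lt (by positivity : (0:ℝ) < (n:ℝ)^2))
        linarith
      nlinarith [bterm_nonneg (n := n) hp0 hpu.le i, h1]
    calc ∑ i ∈ (Finset.range (n + 1)).filter (fun i => ¬ Pr i), bterm n p i
        ≤ ∑ i ∈ (Finset.range (n + 1)).filter (fun i => ¬ Pr i),
            ((i : ℝ) - (n : ℝ) * p) ^ 2 / ((n : ℝ) ^ 2 * ε₀ ^ 2) * bterm n p i :=
          Finset.sum_le_sum step1
      _ ≤ ∑ i ∈ Finset.range (n + 1),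
            ((i : ℝ) - (n : ℝ) * p) ^ 2 / ((n : ℝ) ^ 2 * ε₀ ^ 2) * bterm n p i := by
          apply Finset.sum_le_sum_of_subset_of_nonneg (Finset.filter_subset _ _)
          intro i _ _
          exact mul_nonneg (div_nonneg (sq_nonneg _) hdenpos.le) (bterm_nonneg hp0 hpu.le i)
      _ = (1 / ((n : ℝ) ^ 2 * ε₀ ^ 2)) * ∑ i ∈ Finset.range (n + 1),
            ((i : ℝ) - (n : ℝ) * p) ^ 2 * bterm n p i := by
          rw [Finset.mul_sum]
          apply Finset.sum_congr rfl
          intro i _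
          ring
      _ = (1 / ((n : ℝ) ^ 2 * ε₀ ^ 2)) * ((n : ℝ) * p * (1 - p)) := by rw [sum_sq_bterm]
      _ ≤ 1 / (4 * (n : ℝ) * ε₀ ^ 2) := by
          rw [div_mul_eq_mul_div, one_mul, div_le_div_iff₀ hdenpos (by positivity)]
          have hpq : p * (1 - p) ≤ 1 / 4 := by nlinarith [sq_nonneg (p - 1/2)]
          have he2 : (0 : ℝ) < ε₀ ^ 2 := by positivity
          nlinarith [mul_le_mul_of_nonneg_left hpq
            (le_of_lt (show (0:ℝ) < 4 * (n:ℝ)^2 * ε₀^2 by positivity))]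
  -- conclude
  have hEq : binomProb n p Pr
      = ∑ i ∈ (Finset.range (n + 1)).filter (fun i => Pr i), bterm n p i := by
    unfold binomProb bterm
    rfl
  have hgood : binomProb n p Pr
      = 1 - ∑ i ∈ (Finset.range (n + 1)).filter (fun i => ¬ Pr i), bterm n p i := by
    rw [hEq]; linarith [hsplit, sum_bterm n p]
  rw [hgood]
  -- 1 - 1/(4 n ε₀²) ≥ P₀
  have hfin : 1 / (4 * (n : ℝ) * ε₀ ^ 2) ≤ 1 - P₀ := by
    have he2' : (0:ℝ) < ε₀ ^ 2 := by positivity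
    have hA : (0:ℝ) < 4 * (1 - P₀) * ε₀ ^ 2 := by nlinarith [mul_pos (show (0:ℝ) < 1 - P₀ by linarith) he2']
    rw [div_le_iff₀ (by positivity)]
    rw [div_le_iff₀ hA] at hcn
    nlinarith
  have := hbad
  linarith
end
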